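/- For a complex number α with real part greater than 1/2, the integral ∫₀¹ (1 − x^α − (1−x)^α)·(x(1−x))^{−3/2} dx equals 4α·(B(α + 1/2, 1/2) − B(3/2, α − 1/2)), where B is the Beta function. -/

import Mathlib

/-!
Write `u(x) = 1 - x^α - (1-x)^α` and integrate by parts against
`w(x) = 2(2x-1)(x(1-x))^(-1/2)`, a primitive of `(x(1-x))^(-3/2)`. Near `0` we have
`u(x) = O(x + x^(Re α))` and `w(x) = O(x^(-1/2))`, so for `Re α > 1/2` the integrand is integrable
and the boundary term `u w` vanishes; by the symmetry `x ↦ 1 - x` the same holds near `1`.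
What remains, `-∫ u' w`, is a combination of Beta integrands in which the pair
`B(1/2, α - 1/2) - B(α - 1/2, 1/2)` cancels by the symmetry of `B`.
-/

open Complex MeasureTheory Set Filter intervalIntegral
open scoped Topology

noncomputable section

def powDefect (α : ℂ) (x : ℝ) : ℂ := 1 - (x : ℂ) ^ α - ((1 - x : ℝ) : ℂ) ^ α

def weightPrimitive (x : ℝ) : ℝ := 2 * (2 * x - 1) * (x * (1 - x)) ^ (-(1 / 2) : ℝ)

def betaKernel (u v : ℂ) (x : ℝ) : ℂ := (x : ℂ) ^ (u - 1) * (1 - (x : ℂ)) ^ (v - 1)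

def betaCombination (α : ℂ) (x : ℝ) : ℂ :=
  4 * α * (betaKernel (α + 1 / 2) (1 / 2) x - betaKernel (3 / 2) (α - 1 / 2) x) +
    2 * α * (betaKernel (1 / 2) (α - 1 / 2) x - betaKernel (α - 1 / 2) (1 / 2) x)

end

theorem powDefect_one_sub (α : ℂ) (x : ℝ) : powDefect α (1 - x) = powDefect α x := by
  rw [powDefect, powDefect, sub_sub_cancel]
  ring

theorem weightPrimitive_one_sub (x : ℝ) : weightPrimitive (1 - x) = -weightPrimitive x := by
  rw [weightPrimitive, weightPrimitive, sub_sub_cancel, mul_comm (1 - x) x]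
  ring

theorem hasDerivAt_ofReal_cpow_const_of_pos (α : ℂ) {x : ℝ} (hx : 0 < x) :
    HasDerivAt (fun y : ℝ => (y : ℂ) ^ α) (α * (x : ℂ) ^ (α - 1)) x := by
  simpa using ((hasDerivAt_id (x : ℂ)).cpow_const (c := α) (by simpa using hx)).comp_ofReal

theorem hasDerivAt_powDefect (α : ℂ) {x : ℝ} (hx : x ∈ Ioo (0 : ℝ) 1) :
    HasDerivAt (powDefect α) (α * (((1 - x : ℝ) : ℂ) ^ (α - 1) - (x : ℂ) ^ (α - 1))) x := by
  have h1 := hasDerivAt_ofReal_cpow_const_of_pos α hx.1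
  have h2 := (hasDerivAt_ofReal_cpow_const_of_pos α (sub_pos.2 hx.2)).scomp x
    ((hasDerivAt_id x).const_sub 1)
  refine ((h1.const_sub 1).sub h2).congr_deriv ?_
  rw [neg_one_smul]
  ring

theorem hasDerivAt_weightPrimitive {x : ℝ} (hx : x ∈ Ioo (0 : ℝ) 1) :
    HasDerivAt weightPrimitive ((x * (1 - x)) ^ (-(3 / 2) : ℝ)) x := by
  have ht : 0 < x * (1 - x) := mul_pos hx.1 (sub_pos.2 hx.2)
  have hlin : HasDerivAt (fun y : ℝ => 2 * (2 * y - 1)) 4 x :=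
    ((((hasDerivAt_id x).const_mul 2).sub_const 1).const_mul 2).congr_deriv (by norm_num)
  have hquad : HasDerivAt (fun y : ℝ => y * (1 - y)) (1 - 2 * x) x :=
    ((hasDerivAt_id x).mul ((hasDerivAt_id x).const_sub 1)).congr_deriv (by simp; ring)
  have hpow := (Real.hasDerivAt_rpow_const (p := -(1 / 2)) (Or.inl ht.ne')).comp x hquad
  refine (hlin.mul hpow).congr_deriv ?_
  have hsplit :
      (x * (1 - x)) ^ (-(1 / 2) : ℝ) = (x * (1 - x)) ^ (-(3 / 2) : ℝ) * (x * (1 - x)) := by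
    rw [← Real.rpow_add_one ht.ne']; norm_num
  simp only [Function.comp_apply, hsplit, show (-(1 / 2) - 1 : ℝ) = -(3 / 2) by norm_num]
  ring

theorem ofReal_weightPrimitive {x : ℝ} (hx : x ∈ Ioo (0 : ℝ) 1) :
    (weightPrimitive x : ℂ) =
      2 * (2 * x - 1) * (x : ℂ) ^ (-(1 / 2) : ℂ) * (1 - (x : ℂ)) ^ (-(1 / 2) : ℂ) := by
  rw [weightPrimitive, Real.mul_rpow hx.1.le (sub_pos.2 hx.2).le]
  push_cast
  rw [ofReal_cpow hx.1.le, ofReal_cpow (sub_pos.2 hx.2).le]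
  push_cast
  ring

theorem cpow_mul_cpow_of_add_eq {z : ℂ} (hz : z ≠ 0) {a b c : ℂ} (h : a + b = c) :
    z ^ a * z ^ b = z ^ c := by
  rw [← cpow_add _ _ hz, h]

theorem mul_weightPrimitive_eq_neg_betaCombination (α : ℂ) {x : ℝ} (hx : x ∈ Ioo (0 : ℝ) 1) :
    α * (((1 - x : ℝ) : ℂ) ^ (α - 1) - (x : ℂ) ^ (α - 1)) * weightPrimitive x =
      -betaCombination α x := by
  have hX : (x : ℂ) ≠ 0 := ofReal_ne_zero.2 hx.1.ne'
  have hY : 1 - (x : ℂ) ≠ 0 := by exact_mod_cast (sub_pos.2 hx.2).ne'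
  have powX := fun {a b c : ℂ} (h : a + b = c) => cpow_mul_cpow_of_add_eq hX h
  have powY := fun {a b c : ℂ} (h : a + b = c) => cpow_mul_cpow_of_add_eq hY h
  rw [ofReal_weightPrimitive hx, betaCombination, betaKernel, betaKernel, betaKernel, betaKernel,
    ofReal_sub, ofReal_one]
  set X := (x : ℂ)
  set Y := 1 - (x : ℂ)
  have e1 := powX (a := α - 1) (b := -(1 / 2)) (c := α - 1 / 2 - 1) (by ring)
  have e2 := powY (a := α - 1) (b := -(1 / 2)) (c := α - 1 / 2 - 1) (by ring)
  have e3 := powX (a := α - 1 / 2 - 1) (b := 1) (c := α + 1 / 2 - 1) (by ring)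
  have e4 := powX (a := -(1 / 2)) (b := 1) (c := 3 / 2 - 1) (by ring)
  rw [cpow_one] at e3 e4
  rw [show (1 / 2 : ℂ) - 1 = -(1 / 2) by ring, ← e3, ← e4]
  linear_combination (2 * α * (2 * X - 1) * X ^ (-(1 / 2) : ℂ)) * e2
    - (2 * α * (2 * X - 1) * Y ^ (-(1 / 2) : ℂ)) * e1

theorem hasDerivAt_powDefect_mul_weightPrimitive (α : ℂ) {x : ℝ} (hx : x ∈ Ioo (0 : ℝ) 1) :
    HasDerivAt (fun y => powDefect α y * weightPrimitive y)
      (powDefect α x * (((x * (1 - x)) ^ (-(3 / 2) : ℝ) : ℝ) : ℂ) - betaCombination α x) x := by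
  refine ((hasDerivAt_powDefect α hx).mul
    (hasDerivAt_weightPrimitive hx).ofReal_comp).congr_deriv ?_
  rw [mul_weightPrimitive_eq_neg_betaCombination α hx]
  ring

theorem exists_norm_one_sub_cpow_one_sub_le (α : ℂ) :
    ∃ K : ℝ, ∀ x ∈ Icc (0 : ℝ) (1 / 2), ‖1 - ((1 - x : ℝ) : ℂ) ^ α‖ ≤ K * x := by
  have hderiv : ∀ y ∈ Icc (0 : ℝ) (1 / 2), HasDerivWithinAt (fun y : ℝ => ((1 - y : ℝ) : ℂ) ^ α)
      (-(α * ((1 - y : ℝ) : ℂ) ^ (α - 1))) (Icc 0 (1 / 2)) y := fun y hy =>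
    ((hasDerivAt_ofReal_cpow_const_of_pos α (x := 1 - y) (by linarith [hy.2])).scomp y
      ((hasDerivAt_id y).const_sub 1)).hasDerivWithinAt.congr_deriv (by simp)
  have hcont :
      ContinuousOn (fun y : ℝ => -(α * ((1 - y : ℝ) : ℂ) ^ (α - 1))) (Icc 0 (1 / 2)) := by
    refine (continuousOn_const.mul (ContinuousOn.cpow (by fun_prop) continuousOn_const
      fun y hy => ?_)).neg
    exact ofReal_mem_slitPlane.2 (by linarith [hy.2])
  obtain ⟨K, hK⟩ := isCompact_Icc.exists_bound_of_continuousOn hcont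
  refine ⟨K, fun x hx => ?_⟩
  have hzero : (0 : ℝ) ∈ Icc (0 : ℝ) (1 / 2) := ⟨le_rfl, by norm_num⟩
  simpa [norm_sub_rev, abs_of_nonneg hx.1] using
    (convex_Icc (0 : ℝ) (1 / 2)).norm_image_sub_le_of_norm_hasDerivWithin_le hderiv hK hzero hx

theorem rpow_neg_mul_one_sub_le {s x : ℝ} (hs : 0 ≤ s) (hx : x ∈ Ioc (0 : ℝ) (1 / 2)) :
    (x * (1 - x)) ^ (-s) ≤ 2 ^ s * x ^ (-s) := by
  calc (x * (1 - x)) ^ (-s) ≤ (x / 2) ^ (-s) :=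
        Real.rpow_le_rpow_of_nonpos (by linarith [hx.1]) (by nlinarith [hx.1, hx.2])
          (neg_nonpos.2 hs)
    _ = 2 ^ s * x ^ (-s) := by
        rw [Real.div_rpow hx.1.le zero_le_two, Real.rpow_neg zero_le_two, div_inv_eq_mul, mul_comm]

theorem exists_norm_powDefect_mul_rpow_le (α : ℂ) {s : ℝ} (hs : 0 ≤ s) :
    ∃ K : ℝ, ∀ x ∈ Ioc (0 : ℝ) (1 / 2),
      ‖powDefect α x‖ * (x * (1 - x)) ^ (-s) ≤ K * x ^ (1 - s) + 2 ^ s * x ^ (α.re - s) := by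
  obtain ⟨K, hK⟩ := exists_norm_one_sub_cpow_one_sub_le α
  refine ⟨2 ^ s * K, fun x hx => ?_⟩
  have hdefect : ‖powDefect α x‖ ≤ K * x + x ^ α.re := by
    calc ‖powDefect α x‖ = ‖(1 - ((1 - x : ℝ) : ℂ) ^ α) - (x : ℂ) ^ α‖ := by
          rw [powDefect]; ring_nf
      _ ≤ K * x + x ^ α.re := by
          refine (norm_sub_le _ _).trans (add_le_add (hK x (Ioc_subset_Icc_self hx)) ?_)
          rw [norm_cpow_eq_rpow_re_of_pos hx.1]
  calc ‖powDefect α x‖ * (x * (1 - x)) ^ (-s)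
      ≤ ‖powDefect α x‖ * (2 ^ s * x ^ (-s)) :=
        mul_le_mul_of_nonneg_left (rpow_neg_mul_one_sub_le hs hx) (norm_nonneg _)
    _ ≤ (K * x + x ^ α.re) * (2 ^ s * x ^ (-s)) :=
        mul_le_mul_of_nonneg_right hdefect
          (mul_nonneg (by positivity) (Real.rpow_nonneg hx.1.le _))
    _ = 2 ^ s * K * x ^ (1 - s) + 2 ^ s * x ^ (α.re - s) := by
        rw [sub_eq_add_neg, sub_eq_add_neg, Real.rpow_add hx.1, Real.rpow_add hx.1, Real.rpow_one]
        ring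

theorem intervalIntegrable_zero_one_of_one_sub_eq {E : Type*} [NormedAddCommGroup E] {f : ℝ → E}
    (hf : IntervalIntegrable f volume 0 (1 / 2)) (hsymm : ∀ x, f (1 - x) = f x) :
    IntervalIntegrable f volume 0 1 := by
  refine hf.trans ?_
  have h := hf.comp_sub_left 1
  simp only [hsymm, sub_zero] at h
  norm_num at h
  exact h.symm

theorem intervalIntegrable_powDefect_mul_rpow (α : ℂ) (hα : 1 / 2 < α.re) :
    IntervalIntegrable (fun x : ℝ => powDefect α x * (((x * (1 - x)) ^ (-(3 / 2) : ℝ) : ℝ) : ℂ))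
      volume 0 1 := by
  refine intervalIntegrable_zero_one_of_one_sub_eq ?_ fun x => by
    rw [powDefect_one_sub, sub_sub_cancel, mul_comm (1 - x) x]
  obtain ⟨K, hK⟩ := exists_norm_powDefect_mul_rpow_le α (s := 3 / 2) (by norm_num)
  refine IntervalIntegrable.mono_fun' (g := fun x => K * x ^ (1 - 3 / 2 : ℝ) +
    2 ^ (3 / 2 : ℝ) * x ^ (α.re - 3 / 2)) ?_ ?_ ?_
  · exact ((intervalIntegrable_rpow' (by norm_num)).const_mul K).add
      ((intervalIntegrable_rpow' (by linarith)).const_mul _)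
  · exact Measurable.aestronglyMeasurable (by unfold powDefect; fun_prop)
  · rw [uIoc_of_le (by norm_num), EventuallyLE, ae_restrict_iff' measurableSet_Ioc]
    refine ae_of_all _ fun x hx => ?_
    rw [norm_mul, norm_real, Real.norm_of_nonneg
      (Real.rpow_nonneg (mul_nonneg hx.1.le (by linarith [hx.2])) _)]
    exact hK x hx

theorem tendsto_powDefect_mul_weightPrimitive_nhdsGT_zero (α : ℂ) (hα : 1 / 2 < α.re) :
    Tendsto (fun x => powDefect α x * weightPrimitive x) (𝓝[>] 0) (𝓝 0) := by
  obtain ⟨K, hK⟩ := exists_norm_powDefect_mul_rpow_le α (s := 1 / 2) (by norm_num)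
  have hrpow : ∀ {p : ℝ}, 0 < p → Tendsto (fun x : ℝ => x ^ p) (𝓝[>] 0) (𝓝 0) := fun hp =>
    ((Real.continuous_rpow_const hp.le).tendsto' 0 0 (Real.zero_rpow hp.ne')).mono_left
      nhdsWithin_le_nhds
  have hbound : Tendsto (fun x : ℝ => 2 * (K * x ^ (1 - 1 / 2 : ℝ) +
      2 ^ (1 / 2 : ℝ) * x ^ (α.re - 1 / 2))) (𝓝[>] 0) (𝓝 0) := by
    simpa using (((hrpow (by norm_num)).const_mul K).add
      ((hrpow (by linarith)).const_mul _)).const_mul 2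
  refine squeeze_zero_norm' ?_ hbound
  filter_upwards [Ioc_mem_nhdsGT (by norm_num : (0 : ℝ) < 1 / 2)] with x hx
  have ht : 0 ≤ x * (1 - x) := mul_nonneg hx.1.le (by linarith [hx.2])
  have hweight : |2 * (2 * x - 1)| ≤ 2 := by
    rw [abs_le]; constructor <;> nlinarith [hx.1, hx.2]
  calc ‖powDefect α x * weightPrimitive x‖
      = |2 * (2 * x - 1)| * (‖powDefect α x‖ * (x * (1 - x)) ^ (-(1 / 2) : ℝ)) := by
        rw [norm_mul, norm_real, weightPrimitive, Real.norm_eq_abs, abs_mul, abs_of_nonneg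
          (Real.rpow_nonneg ht _)]
        ring
    _ ≤ 2 * (K * x ^ (1 - 1 / 2 : ℝ) + 2 ^ (1 / 2 : ℝ) * x ^ (α.re - 1 / 2)) :=
        mul_le_mul hweight (hK x hx) (mul_nonneg (norm_nonneg _) (Real.rpow_nonneg ht _))
          zero_le_two

theorem tendsto_powDefect_mul_weightPrimitive_nhdsLT_one (α : ℂ) (hα : 1 / 2 < α.re) :
    Tendsto (fun x => powDefect α x * weightPrimitive x) (𝓝[<] 1) (𝓝 0) := by
  have hreflect : Tendsto (fun x : ℝ => 1 - x) (𝓝[<] 1) (𝓝[>] 0) :=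
    tendsto_nhdsWithin_of_tendsto_nhds_of_eventually_within _
      (((continuous_const.sub continuous_id).tendsto' 1 0 (sub_self 1)).mono_left
        nhdsWithin_le_nhds)
      (eventually_nhdsWithin_of_forall fun x hx => mem_Ioi.2 (sub_pos.2 hx))
  simpa [powDefect_one_sub, weightPrimitive_one_sub] using
    ((tendsto_powDefect_mul_weightPrimitive_nhdsGT_zero α hα).comp hreflect).neg

theorem intervalIntegrable_betaKernel {u v : ℂ} (hu : 0 < u.re) (hv : 0 < v.re) :
    IntervalIntegrable (betaKernel u v) volume 0 1 :=
  betaIntegral_convergent hu hv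

theorem integral_betaKernel (u v : ℂ) :
    ∫ x in (0 : ℝ)..1, betaKernel u v x = betaIntegral u v :=
  rfl

theorem intervalIntegrable_betaCombination (α : ℂ) (hα : 1 / 2 < α.re) :
    IntervalIntegrable (betaCombination α) volume 0 1 := by
  have hplus : 0 < (α + 1 / 2).re := by simp; linarith
  have hminus : 0 < (α - 1 / 2).re := by simp; linarith
  have hhalf : 0 < (1 / 2 : ℂ).re := by norm_num
  have hthree : 0 < (3 / 2 : ℂ).re := by norm_num
  exact (((intervalIntegrable_betaKernel hplus hhalf).sub
    (intervalIntegrable_betaKernel hthree hminus)).const_mul _).add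
    (((intervalIntegrable_betaKernel hhalf hminus).sub
      (intervalIntegrable_betaKernel hminus hhalf)).const_mul _)

theorem integral_betaCombination (α : ℂ) (hα : 1 / 2 < α.re) :
    ∫ x in (0 : ℝ)..1, betaCombination α x =
      4 * α * (betaIntegral (α + 1 / 2) (1 / 2) - betaIntegral (3 / 2) (α - 1 / 2)) := by
  have hplus : 0 < (α + 1 / 2).re := by simp; linarith
  have hminus : 0 < (α - 1 / 2).re := by simp; linarith
  have hhalf : 0 < (1 / 2 : ℂ).re := by norm_num
  have h1 := intervalIntegrable_betaKernel hplus hhalf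
  have h2 := intervalIntegrable_betaKernel (by norm_num : 0 < (3 / 2 : ℂ).re) hminus
  have h3 := intervalIntegrable_betaKernel hhalf hminus
  have h4 := intervalIntegrable_betaKernel hminus hhalf
  simp only [betaCombination]
  rw [intervalIntegral.integral_add ((h1.sub h2).const_mul _) ((h3.sub h4).const_mul _),
    intervalIntegral.integral_const_mul, intervalIntegral.integral_const_mul,
    intervalIntegral.integral_sub h1 h2, intervalIntegral.integral_sub h3 h4,
    integral_betaKernel, integral_betaKernel, integral_betaKernel, integral_betaKernel,
    betaIntegral_symm (α - 1 / 2) (1 / 2), sub_self, mul_zero, add_zero]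

theorem integral_one_sub_cpow_beta (α : ℂ) (hα : 1 / 2 < α.re) :
    ∫ x in (0 : ℝ)..1,
        (1 - (x : ℂ) ^ α - ((1 - x : ℝ) : ℂ) ^ α) *
          (((x * (1 - x) : ℝ) ^ (-(3 / 2) : ℝ) : ℝ) : ℂ) =
      4 * α * (Complex.betaIntegral (α + 1 / 2) (1 / 2) -
        Complex.betaIntegral (3 / 2) (α - 1 / 2)) := by
  have hf := intervalIntegrable_powDefect_mul_rpow α hα
  have hc := intervalIntegrable_betaCombination α hα
  have hFTC := integral_eq_sub_of_hasDerivAt_of_tendsto zero_lt_one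
    (fun x hx => hasDerivAt_powDefect_mul_weightPrimitive α hx) (hf.sub hc)
    (tendsto_powDefect_mul_weightPrimitive_nhdsGT_zero α hα)
    (tendsto_powDefect_mul_weightPrimitive_nhdsLT_one α hα)
  rwa [intervalIntegral.integral_sub hf hc, sub_self, sub_eq_zero,
    integral_betaCombination α hα] at hFTC
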